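/- arXiv:2303.14040 — 7 statements merged into one kernel-verified Lean document; each statement's English description precedes it below -/
import Mathlib

section
/- For every integer m ≥ 1, all points u, v ∈ ℝ^m and every M > 0, one has ∫_{[−M,M]^m} |1_{Q_u}(t) − 1_{Q_v}(t)| dt ≤ (2M)^{m−1} · ‖u − v‖₁, where ‖·‖₁ denotes the ℓ¹ norm on ℝ^m. -/
/-!
If `t` lies in exactly one of the orthants `Q_u`, `Q_v`, then some coordinate `t i` lies
between `u i` and `v i`. So `Q_u ∆ Q_v` is covered by the slabs `{t | t i ∈ [u i, v i]}`, and
the part of such a slab inside the cube `[-M, M]^m` has volume at most `(2M)^(m-1) |u i - v i|`.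
-/

open MeasureTheory Set
open scoped Classical

theorem setOf_le_diff_subset_iUnion_uIcc {ι α : Type*} [LinearOrder α] (u v : ι → α) :
    {t | u ≤ t} \ {t | v ≤ t} ⊆ ⋃ i, {t : ι → α | t i ∈ uIcc (u i) (v i)} := by
  rintro t ⟨hu, hv⟩
  obtain ⟨i, hi⟩ : ∃ i, t i < v i := by simpa [Pi.le_def] using hv
  exact mem_iUnion.mpr ⟨i, Icc_subset_uIcc ⟨hu i, hi.le⟩⟩

theorem symmDiff_setOf_le_subset_iUnion_uIcc {ι α : Type*} [LinearOrder α] (u v : ι → α) :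
    symmDiff {t | u ≤ t} {t | v ≤ t} ⊆ ⋃ i, {t : ι → α | t i ∈ uIcc (u i) (v i)} := by
  refine union_subset (setOf_le_diff_subset_iUnion_uIcc u v) ?_
  simpa only [uIcc_comm] using setOf_le_diff_subset_iUnion_uIcc v u

theorem measure_pi_inter_preimage_le {ι : Type*} [Fintype ι] {X : ι → Type*}
    [∀ i, MeasurableSpace (X i)] (μ : ∀ i, Measure (X i)) [∀ i, SigmaFinite (μ i)]
    (s : ∀ i, Set (X i)) (i : ι) (I : Set (X i)) :
    Measure.pi μ (univ.pi s ∩ {t | t i ∈ I})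
      ≤ μ i I * ∏ j ∈ Finset.univ.erase i, μ j (s j) := by
  calc Measure.pi μ (univ.pi s ∩ {t | t i ∈ I})
      ≤ Measure.pi μ (univ.pi (Function.update s i I)) := by
        refine measure_mono fun t ⟨hs, hI⟩ j _ => ?_
        rcases eq_or_ne j i with rfl | hj
        · simpa using hI
        · simpa [hj] using hs j trivial
    _ = μ i I * ∏ j ∈ Finset.univ.erase i, μ j (s j) := by
        rw [Measure.pi_pi, ← Finset.mul_prod_erase _ _ (Finset.mem_univ i)]
        simp only [Function.update_self]
        congr 1
        refine Finset.prod_congr rfl fun j hj => ?_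
        rw [Function.update_of_ne (Finset.ne_of_mem_erase hj)]

theorem volume_cube_inter_slab_le {ι : Type*} [Fintype ι] {M : ℝ} (hM : 0 ≤ M) (i : ι)
    (a b : ℝ) :
    volume.real (Icc (fun _ => -M) (fun _ => M) ∩ {t : ι → ℝ | t i ∈ uIcc a b})
      ≤ (2 * M) ^ (Fintype.card ι - 1) * |b - a| := by
  have h := measure_pi_inter_preimage_le (fun _ : ι => volume) (fun _ => Icc (-M) M) i (uIcc a b)
  rw [pi_univ_Icc, ← volume_pi, Real.volume_interval, Real.volume_Icc, Finset.prod_const,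
    Finset.card_erase_of_mem (Finset.mem_univ i), Finset.card_univ] at h
  calc _ ≤ (ENNReal.ofReal |b - a| * ENNReal.ofReal (M - -M) ^ (Fintype.card ι - 1)).toReal :=
        ENNReal.toReal_mono (by finiteness) h
    _ = (2 * M) ^ (Fintype.card ι - 1) * |b - a| := by
        rw [ENNReal.toReal_mul, ENNReal.toReal_pow, ENNReal.toReal_ofReal (abs_nonneg _),
          ENNReal.toReal_ofReal (by linarith), sub_neg_eq_add, ← two_mul, mul_comm]

theorem stmt0_general (m : ℕ) (u v : Fin m → ℝ) (M : ℝ) (hM : 0 < M) :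
    (∫ t in (Set.Icc (fun _ => -M) (fun _ => M) : Set (Fin m → ℝ)),
        |(if u ≤ t then (1 : ℝ) else 0) - (if v ≤ t then (1 : ℝ) else 0)|)
      ≤ (2 * M) ^ (m - 1) * ∑ i, |u i - v i| := by
  set cube : Set (Fin m → ℝ) := Icc (fun _ => -M) (fun _ => M)
  set slab : Fin m → Set (Fin m → ℝ) := fun i => {t | t i ∈ uIcc (u i) (v i)}
  have hQ (w : Fin m → ℝ) : MeasurableSet {t | w ≤ t} := measurableSet_Ici
  have hintegrand :
      (fun t : Fin m → ℝ => |(if u ≤ t then (1 : ℝ) else 0) - (if v ≤ t then 1 else 0)|) =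
        (symmDiff {t | u ≤ t} {t | v ≤ t}).indicator (fun _ => 1) := by
    ext t
    rw [← abs_of_nonneg (indicator_nonneg (fun _ _ => zero_le_one) t),
      apply_indicator_symmDiff abs_neg]
    simp [indicator_apply]
  calc _ = volume.real (cube ∩ symmDiff {t | u ≤ t} {t | v ≤ t}) := by
        rw [hintegrand, setIntegral_indicator ((hQ u).symmDiff (hQ v)), setIntegral_const]
        simp
    _ ≤ volume.real (⋃ i, cube ∩ slab i) := by
        rw [← inter_iUnion]
        exact measureReal_mono
          (inter_subset_inter_right _ (symmDiff_setOf_le_subset_iUnion_uIcc u v))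
          (measure_ne_top_of_subset inter_subset_left isCompact_Icc.measure_lt_top.ne)
    _ ≤ ∑ i, volume.real (cube ∩ slab i) := measureReal_iUnion_fintype_le _
    _ ≤ ∑ i, (2 * M) ^ (m - 1) * |u i - v i| := by
        refine Finset.sum_le_sum fun i _ => ?_
        simpa [abs_sub_comm] using volume_cube_inter_slab_le hM.le i (u i) (v i)
    _ = _ := (Finset.mul_sum ..).symm

/-- For every integer `m ≥ 1`, all `u v : ℝ^m` and every `M > 0`,
`∫_{[−M,M]^m} |1_{Q_u}(t) − 1_{Q_v}(t)| dt ≤ (2M)^{m−1} ⬝ ‖u − v‖₁`, where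
`Q_u = {t | u ≤ t}` (coordinatewise order) and `‖·‖₁` is the ℓ¹ norm. -/
theorem stmt0 (m : ℕ) (hm : 1 ≤ m) (u v : Fin m → ℝ) (M : ℝ) (hM : 0 < M) :
    (∫ t in (Set.Icc (fun _ => -M) (fun _ => M) : Set (Fin m → ℝ)),
        |(if u ≤ t then (1 : ℝ) else 0) - (if v ≤ t then (1 : ℝ) else 0)|)
      ≤ (2 * M) ^ (m - 1) * ∑ i, |u i - v i| :=
  stmt0_general m u v M hM
end

section
/- Let φ, φ' : ℝ^m → ℤ be finitely presented functions and let M > 0. Then ∫_{[−M,M]^m} |φ(t) − φ'(t)| dt ≤ (2M)^{m−1} · d(φ, φ'), as an inequality in [0, +∞]. -/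
open MeasureTheory
open scoped Classical ENNReal

/-- Indicator of the upper set `Q_u = {t | u ≤ t}` (coordinatewise order on `ℝ^m`). -/
noncomputable def indQ {m : ℕ} (u t : Fin m → ℝ) : ℤ := if u ≤ t then 1 else 0

/-- `(P, N)` is a decomposition of `φ` if `φ = Σ_{u ∈ P} 1_{Q_u} − Σ_{v ∈ N} 1_{Q_v}`. -/
def IsDecomp {m : ℕ} (φ : (Fin m → ℝ) → ℤ) (P N : Multiset (Fin m → ℝ)) : Prop :=
  ∀ t, φ t = (P.map fun u => indQ u t).sum - (N.map fun u => indQ u t).sum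

/-- A function `φ : ℝ^m → ℤ` is finitely presented if it admits a decomposition. -/
def FinitelyPresented {m : ℕ} (φ : (Fin m → ℝ) → ℤ) : Prop := ∃ P N, IsDecomp φ P N

/-- The ℓ¹ distance on `ℝ^m`. -/
noncomputable def l1 {m : ℕ} (u v : Fin m → ℝ) : ℝ := ∑ i, |u i - v i|

/-- The signed 1-Wasserstein distance between finitely presented functions: the infimum in
`[0,∞]` over decompositions `(P,N)` of `φ`, `(P',N')` of `φ'` and multiset bijections
`h : P ⊔ N' → N ⊔ P'` (encoded as a multiset `pr` of pairs) of the cost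
`Σ_u ‖u − h u‖₁`; the infimum of the empty set is `+∞`. -/
noncomputable def signedWassDist {m : ℕ} (φ φ' : (Fin m → ℝ) → ℤ) : ℝ≥0∞ :=
  sInf { c : ℝ≥0∞ | ∃ (P N P' N' : Multiset (Fin m → ℝ))
      (pr : Multiset ((Fin m → ℝ) × (Fin m → ℝ))),
      IsDecomp φ P N ∧ IsDecomp φ' P' N' ∧
      pr.map Prod.fst = P + N' ∧ pr.map Prod.snd = N + P' ∧
      c = ENNReal.ofReal ((pr.map fun uv => l1 uv.1 uv.2).sum) }

/-!
For a single pair `(u, v)`, `|1_{Q_u} - 1_{Q_v}|` is the indicator of `Q_u ∆ Q_v`, and a point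
of `Q_u ∆ Q_v` has some coordinate `t i` between `u i` and `v i`. The slab of such points meets
`[-M, M]^m` in volume at most `|u i - v i| (2M)^(m-1)`, so the pair contributes at most
`(2M)^(m-1) ‖u - v‖₁` to the integral. Given decompositions and a bijection `h`, the difference
`φ - φ'` is `Σ_u (1_{Q_u} - 1_{Q_{h u}})`, and the triangle inequality bounds the integral by
`(2M)^(m-1)` times the cost; taking the infimum gives the theorem.
-/

open Set Function
open scoped symmDiff

theorem ENNReal.ofReal_multiset_sum {ι : Type*} (s : Multiset ι) {f : ι → ℝ}
    (hf : ∀ i ∈ s, 0 ≤ f i) :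
    ENNReal.ofReal (s.map f).sum = (s.map fun i => ENNReal.ofReal (f i)).sum := by
  induction s using Multiset.induction_on with
  | empty => simp
  | cons a s ih =>
    simp only [Multiset.forall_mem_cons] at hf
    simp only [Multiset.map_cons, Multiset.sum_cons]
    rw [ENNReal.ofReal_add hf.1 (Multiset.sum_nonneg fun x hx => ?_), ih hf.2]
    obtain ⟨i, hi, rfl⟩ := Multiset.mem_map.1 hx
    exact hf.2 i hi

theorem MeasureTheory.lintegral_multiset_sum_map {α ι : Type*} [MeasurableSpace α]
    {μ : Measure α} (s : Multiset ι) {f : ι → α → ℝ≥0∞} (hf : ∀ i ∈ s, AEMeasurable (f i) μ) :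
    ∫⁻ a, (s.map fun i => f i a).sum ∂μ = (s.map fun i => ∫⁻ a, f i a ∂μ).sum := by
  induction s using Multiset.induction_on with
  | empty => simp
  | cons a s ih =>
    simp only [Multiset.forall_mem_cons] at hf
    simp only [Multiset.map_cons, Multiset.sum_cons]
    rw [lintegral_add_left' hf.1, ih hf.2]

theorem MeasureTheory.Measure.pi_preimage_eval_inter_univ_pi {ι : Type*} [Fintype ι]
    [DecidableEq ι] {α : ι → Type*} [∀ i, MeasurableSpace (α i)] (μ : ∀ i, Measure (α i))
    [∀ i, SigmaFinite (μ i)] (i : ι) (s : Set (α i)) (I : ∀ j, Set (α j)) :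
    Measure.pi μ (eval i ⁻¹' s ∩ univ.pi I)
      = μ i (s ∩ I i) * ∏ j ∈ Finset.univ \ {i}, μ j (I j) := by
  have hpi : eval i ⁻¹' s ∩ univ.pi I = univ.pi (update I i (s ∩ I i)) := by
    rw [univ_pi_update i I (s ∩ I i) fun _ t => t]
    ext x
    simp only [mem_inter_iff, mem_preimage, eval, mem_ofPred_eq, mem_pi, mem_compl_singleton_iff]
    grind
  rw [hpi, Measure.pi_pi]
  simp only [apply_update (fun j => μ j)]
  rw [Finset.prod_update_of_mem (Finset.mem_univ i)]

theorem volume_preimage_eval_inter_cube_le {m : ℕ} (M : ℝ) (i : Fin m) (s : Set ℝ) :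
    volume (eval i ⁻¹' s ∩ Icc (fun _ => -M) (fun _ => M))
      ≤ volume s * ENNReal.ofReal (2 * M) ^ (m - 1) := by
  rw [← pi_univ_Icc, volume_pi, Measure.pi_preimage_eval_inter_univ_pi]
  gcongr
  · exact inter_subset_left
  · rw [Finset.prod_const, Finset.card_sdiff_of_subset (by simp), Finset.card_univ,
      Fintype.card_fin, Finset.card_singleton, Real.volume_Icc, sub_neg_eq_add, two_mul]

theorem symmDiff_Ici_subset_iUnion_preimage_uIcc {ι α : Type*} [LinearOrder α] (u v : ι → α) :
    Ici u ∆ Ici v ⊆ ⋃ i, eval i ⁻¹' uIcc (u i) (v i) := by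
  suffices key : ∀ u v : ι → α, Ici u \ Ici v ⊆ ⋃ i, eval i ⁻¹' uIcc (u i) (v i) by
    refine union_subset (key u v) ?_
    simpa only [uIcc_comm] using key v u
  rintro u v t ⟨hu, hv⟩
  obtain ⟨i, hi⟩ : ∃ i, ¬ v i ≤ t i := by simpa [Pi.le_def] using hv
  exact mem_iUnion.2 ⟨i, Icc_subset_uIcc ⟨hu i, (not_le.1 hi).le⟩⟩

theorem ofReal_abs_indQ_sub_indQ {m : ℕ} (u v t : Fin m → ℝ) :
    ENNReal.ofReal |((indQ u t - indQ v t : ℤ) : ℝ)| = (Ici u ∆ Ici v).indicator 1 t := by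
  by_cases hu : u ≤ t <;> by_cases hv : v ≤ t <;> simp [indQ, hu, hv, mem_symmDiff]

theorem volume_symmDiff_Ici_inter_cube_le {m : ℕ} {M : ℝ} (hM : 0 ≤ M) (u v : Fin m → ℝ) :
    volume ((Ici u ∆ Ici v) ∩ Icc (fun _ => -M) (fun _ => M))
      ≤ ENNReal.ofReal ((2 * M) ^ (m - 1)) * ENNReal.ofReal (l1 u v) := by
  calc volume ((Ici u ∆ Ici v) ∩ Icc (fun _ => -M) (fun _ => M))
      ≤ volume (⋃ i, eval i ⁻¹' uIcc (u i) (v i) ∩ Icc (fun _ => -M) (fun _ => M)) := by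
        rw [← iUnion_inter]
        exact measure_mono <|
          inter_subset_inter_left _ (symmDiff_Ici_subset_iUnion_preimage_uIcc u v)
    _ ≤ ∑ i, volume (eval i ⁻¹' uIcc (u i) (v i) ∩ Icc (fun _ => -M) (fun _ => M)) :=
        measure_iUnion_fintype_le _ _
    _ ≤ ∑ i, ENNReal.ofReal |u i - v i| * ENNReal.ofReal (2 * M) ^ (m - 1) := by
        gcongr with i
        rw [abs_sub_comm, ← Real.volume_interval]
        exact volume_preimage_eval_inter_cube_le M i _
    _ = ENNReal.ofReal ((2 * M) ^ (m - 1)) * ENNReal.ofReal (l1 u v) := by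
        rw [← Finset.sum_mul, mul_comm, ENNReal.ofReal_pow (by positivity), l1,
          ENNReal.ofReal_sum_of_nonneg fun i _ => abs_nonneg _]

theorem IsDecomp.sub_eq_sum_map_indQ_sub {m : ℕ} {φ φ' : (Fin m → ℝ) → ℤ}
    {P N P' N' : Multiset (Fin m → ℝ)} {pr : Multiset ((Fin m → ℝ) × (Fin m → ℝ))}
    (h : IsDecomp φ P N) (h' : IsDecomp φ' P' N') (hfst : pr.map Prod.fst = P + N')
    (hsnd : pr.map Prod.snd = N + P') (t : Fin m → ℝ) :
    φ t - φ' t = (pr.map fun uv => indQ uv.1 t - indQ uv.2 t).sum := by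
  have hsum : ∀ f : (Fin m → ℝ) × (Fin m → ℝ) → Fin m → ℝ,
      (pr.map fun uv => indQ (f uv) t).sum = ((pr.map f).map fun u => indQ u t).sum := by
    simp [Multiset.map_map]
  rw [Multiset.sum_map_sub, hsum Prod.fst, hsum Prod.snd, hfst, hsnd, h t, h' t]
  simp only [Multiset.map_add, Multiset.sum_add]
  ring

theorem lintegral_cube_abs_sub_le_of_pairing {m : ℕ} {φ φ' : (Fin m → ℝ) → ℤ} {M : ℝ}
    (hM : 0 ≤ M) {P N P' N' : Multiset (Fin m → ℝ)} {pr : Multiset ((Fin m → ℝ) × (Fin m → ℝ))}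
    (h : IsDecomp φ P N) (h' : IsDecomp φ' P' N') (hfst : pr.map Prod.fst = P + N')
    (hsnd : pr.map Prod.snd = N + P') :
    ∫⁻ t in Icc (fun _ => -M) (fun _ => M), ENNReal.ofReal |((φ t - φ' t : ℤ) : ℝ)|
      ≤ ENNReal.ofReal ((2 * M) ^ (m - 1))
        * ENNReal.ofReal ((pr.map fun uv => l1 uv.1 uv.2).sum) := by
  set cube : Set (Fin m → ℝ) := Icc (fun _ => -M) (fun _ => M)
  have hmeas : ∀ u v : Fin m → ℝ, MeasurableSet (Ici u ∆ Ici v) := fun _ _ =>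
    measurableSet_Ici.symmDiff measurableSet_Ici
  calc ∫⁻ t in cube, ENNReal.ofReal |((φ t - φ' t : ℤ) : ℝ)|
      ≤ ∫⁻ t in cube, (pr.map fun uv => (Ici uv.1 ∆ Ici uv.2).indicator 1 t).sum := by
        refine lintegral_mono fun t => ?_
        have hsub : ∀ a b : ℤ, ENNReal.ofReal |((a + b : ℤ) : ℝ)|
            ≤ ENNReal.ofReal |(a : ℝ)| + ENNReal.ofReal |(b : ℝ)| := fun a b => by
          push_cast
          exact (ENNReal.ofReal_le_ofReal (abs_add_le _ _)).trans ENNReal.ofReal_add_le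
        rw [h.sub_eq_sum_map_indQ_sub h' hfst hsnd t]
        simpa only [Multiset.map_map, comp_def, ofReal_abs_indQ_sub_indQ] using
          Multiset.le_sum_of_subadditive (fun n : ℤ => ENNReal.ofReal |(n : ℝ)|) (by simp) hsub
            (pr.map fun uv => indQ uv.1 t - indQ uv.2 t)
    _ = (pr.map fun uv => volume ((Ici uv.1 ∆ Ici uv.2) ∩ cube)).sum := by
        rw [lintegral_multiset_sum_map _ fun uv _ =>
          (measurable_const.indicator (hmeas uv.1 uv.2)).aemeasurable]
        simp only [lintegral_indicator_one (hmeas _ _), Measure.restrict_apply (hmeas _ _)]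
    _ ≤ (pr.map fun uv => ENNReal.ofReal ((2 * M) ^ (m - 1))
          * ENNReal.ofReal (l1 uv.1 uv.2)).sum :=
        Multiset.sum_map_le_sum_map _ _ fun uv _ => volume_symmDiff_Ici_inter_cube_le hM uv.1 uv.2
    _ = _ := by
        rw [Multiset.sum_map_mul_left, ENNReal.ofReal_multiset_sum]
        exact fun uv _ => Finset.sum_nonneg fun i _ => abs_nonneg _

theorem stmt2_general (m : ℕ) (φ φ' : (Fin m → ℝ) → ℤ) (M : ℝ) (hM : 0 < M) :
    (∫⁻ t in (Set.Icc (fun _ => -M) (fun _ => M) : Set (Fin m → ℝ)),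
        ENNReal.ofReal |((φ t - φ' t : ℤ) : ℝ)|)
      ≤ ENNReal.ofReal ((2 * M) ^ (m - 1)) * signedWassDist φ φ' := by
  -- `d = ∞` when no pairing exists, and `0 * ∞ = 0`: the factor must be nonzero.
  have hK : ENNReal.ofReal ((2 * M) ^ (m - 1)) ≠ 0 := by
    rw [Ne, ENNReal.ofReal_eq_zero, not_le]
    positivity
  rw [signedWassDist, sInf_eq_iInf', ENNReal.mul_iInf_of_ne hK ENNReal.ofReal_ne_top]
  refine le_iInf ?_
  rintro ⟨_, P, N, P', N', pr, h, h', hfst, hsnd, rfl⟩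
  exact lintegral_cube_abs_sub_le_of_pairing hM.le h h' hfst hsnd

/-- For finitely presented `φ, φ' : ℝ^m → ℤ` and `M > 0`,
`∫_{[−M,M]^m} |φ − φ'| ≤ (2M)^{m−1} ⬝ d(φ, φ')` as an inequality in `[0, +∞]`. -/
theorem stmt2 (m : ℕ) (φ φ' : (Fin m → ℝ) → ℤ)
    (hφ : FinitelyPresented φ) (hφ' : FinitelyPresented φ') (M : ℝ) (hM : 0 < M) :
    (∫⁻ t in (Set.Icc (fun _ => -M) (fun _ => M) : Set (Fin m → ℝ)),
        ENNReal.ofReal |((φ t - φ' t : ℤ) : ℝ)|)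
      ≤ ENNReal.ofReal ((2 * M) ^ (m - 1)) * signedWassDist φ φ' :=
  stmt2_general m φ φ' M hM
end

section
/- Let N ≥ 0 and, for each 0 ≤ k ≤ N, let D_k and D'_k be finite multisets of pairs (a, b) ∈ ℝ² with a < b. Define φ = Σ_{k=0}^N (−1)^k Σ_{(a,b)∈D_k} (1_{[a,∞)} − 1_{[b,∞)}) and φ' = Σ_{k=0}^N (−1)^k Σ_{(a,b)∈D'_k} (1_{[a,∞)} − 1_{[b,∞)}). Then d(φ, φ') ≤ 2 · Σ_{k=0}^N W₁(D_k, D'_k). -/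
open scoped Classical ENNReal

/-- Indicator of `Q_u = [u, ∞)` on `ℝ`. -/
noncomputable def indR (u t : ℝ) : ℤ := if u ≤ t then 1 else 0

/-- `(P, N)` is a decomposition of `φ` if `φ = Σ_{u ∈ P} 1_{[u,∞)} − Σ_{v ∈ N} 1_{[v,∞)}`. -/
def IsDecompR (φ : ℝ → ℤ) (P N : Multiset ℝ) : Prop :=
  ∀ t, φ t = (P.map fun u => indR u t).sum - (N.map fun u => indR u t).sum

/-- The signed 1-Wasserstein distance between finitely presented functions on `ℝ`. -/
noncomputable def signedDistR (φ φ' : ℝ → ℤ) : ℝ≥0∞ :=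
  sInf { c : ℝ≥0∞ | ∃ (P N P' N' : Multiset ℝ) (pr : Multiset (ℝ × ℝ)),
      IsDecompR φ P N ∧ IsDecompR φ' P' N' ∧
      pr.map Prod.fst = P + N' ∧ pr.map Prod.snd = N + P' ∧
      c = ENNReal.ofReal ((pr.map fun uv => |uv.1 - uv.2|).sum) }

/-- The 1-Wasserstein distance between persistence diagrams (finite multisets of pairs
`(a, b)` with `a < b`): the infimum over partial matchings (a multiset `pr` of matched
pairs together with the unmatched remainders `r`, `r'`) of the cost
`Σ_{matched} ‖x − η x‖_∞ + Σ_{unmatched (a,b)} (b − a)/2`. -/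
noncomputable def W1 (D D' : Multiset (ℝ × ℝ)) : ℝ≥0∞ :=
  sInf { c : ℝ≥0∞ | ∃ (pr : Multiset ((ℝ × ℝ) × (ℝ × ℝ))) (r r' : Multiset (ℝ × ℝ)),
      pr.map Prod.fst + r = D ∧ pr.map Prod.snd + r' = D' ∧
      c = ENNReal.ofReal ((pr.map fun xy => max |xy.1.1 - xy.2.1| |xy.1.2 - xy.2.2|).sum
        + ((r + r').map fun ab => (ab.2 - ab.1) / 2).sum) }

/-!
A matching of persistence diagrams induces a pairing of endpoints: a matched pair
`(a, b) ↔ (a', b')` pairs `a` with `a'` and `b` with `b'`, at cost at most `2 ‖(a, b) - (a', b')‖_∞`,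
and an unmatched point `(a, b)` pairs its own endpoints, at cost `b - a = 2 · (b - a) / 2`.
Since `d` is subadditive under sums of functions and invariant under the sign change
`(C⁺, C⁻) ↦ (C⁻, C⁺)`, the alternating sum over `k` costs at most the sum of these bounds.
-/

lemma isDecompR_zero : IsDecompR 0 0 0 := fun _ => by simp

lemma IsDecompR.add {φ ψ : ℝ → ℤ} {P N P' N' : Multiset ℝ} (hφ : IsDecompR φ P N)
    (hψ : IsDecompR ψ P' N') : IsDecompR (φ + ψ) (P + P') (N + N') := fun t => by
  simp only [Pi.add_apply, hφ t, hψ t, Multiset.map_add, Multiset.sum_add]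
  ring

lemma IsDecompR.neg {φ : ℝ → ℤ} {P N : Multiset ℝ} (hφ : IsDecompR φ P N) :
    IsDecompR (-φ) N P := fun t => by
  simp only [Pi.neg_apply, hφ t, neg_sub]

lemma signedDistR_le {φ φ' : ℝ → ℤ} {P N P' N' : Multiset ℝ} {pr : Multiset (ℝ × ℝ)}
    (hφ : IsDecompR φ P N) (hφ' : IsDecompR φ' P' N') (hfst : pr.map Prod.fst = P + N')
    (hsnd : pr.map Prod.snd = N + P') :
    signedDistR φ φ' ≤ ENNReal.ofReal ((pr.map fun uv => |uv.1 - uv.2|).sum) :=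
  sInf_le ⟨P, N, P', N', pr, hφ, hφ', hfst, hsnd, rfl⟩

lemma signedDistR_zero : signedDistR 0 0 = 0 :=
  nonpos_iff_eq_zero.mp <| by
    simpa using signedDistR_le (pr := 0) isDecompR_zero isDecompR_zero (by simp) (by simp)

lemma signedDistR_add_le (φ₁ φ₂ φ₁' φ₂' : ℝ → ℤ) :
    signedDistR (φ₁ + φ₂) (φ₁' + φ₂') ≤ signedDistR φ₁ φ₁' + signedDistR φ₂ φ₂' := by
  unfold signedDistR
  rw [ENNReal.sInf_add]
  refine le_iInf₂ fun c₁ hc₁ => ?_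
  rw [ENNReal.add_sInf]
  refine le_iInf₂ fun c₂ hc₂ => ?_
  obtain ⟨P₁, N₁, P₁', N₁', pr₁, h₁, h₁', hfst₁, hsnd₁, rfl⟩ := hc₁
  obtain ⟨P₂, N₂, P₂', N₂', pr₂, h₂, h₂', hfst₂, hsnd₂, rfl⟩ := hc₂
  refine le_trans (signedDistR_le (pr := pr₁ + pr₂) (h₁.add h₂) (h₁'.add h₂') ?_ ?_) ?_
  · rw [Multiset.map_add, hfst₁, hfst₂]; abel
  · rw [Multiset.map_add, hsnd₁, hsnd₂]; abel
  · rw [Multiset.map_add, Multiset.sum_add]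
    exact ENNReal.ofReal_add_le

lemma signedDistR_neg_le (φ φ' : ℝ → ℤ) : signedDistR (-φ) (-φ') ≤ signedDistR φ φ' := by
  refine le_sInf fun c ⟨P, N, P', N', pr, hφ, hφ', hfst, hsnd, hc⟩ => ?_
  refine hc ▸ le_trans (signedDistR_le (pr := pr.map Prod.swap) hφ.neg hφ'.neg ?_ ?_) ?_
  · simp only [Multiset.map_map, Function.comp_def, Prod.fst_swap, hsnd]
  · simp only [Multiset.map_map, Function.comp_def, Prod.snd_swap, hfst]
  · simp only [Multiset.map_map, Function.comp_def, Prod.fst_swap, Prod.snd_swap, abs_sub_comm,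
      le_rfl]

lemma signedDistR_neg_one_pow_mul_le (n : ℕ) (φ φ' : ℝ → ℤ) :
    signedDistR (fun t => (-1) ^ n * φ t) (fun t => (-1) ^ n * φ' t) ≤ signedDistR φ φ' := by
  rcases neg_one_pow_eq_or ℤ n with h | h
  · simp only [h, one_mul, le_rfl]
  · simp only [h, neg_one_mul]
    exact signedDistR_neg_le φ φ'

lemma signedDistR_sum_le {ι : Type*} (s : Finset ι) (φ φ' : ι → ℝ → ℤ) :
    signedDistR (∑ i ∈ s, φ i) (∑ i ∈ s, φ' i) ≤ ∑ i ∈ s, signedDistR (φ i) (φ' i) := by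
  simpa only [Prod.fst_sum, Prod.snd_sum] using
    Finset.le_sum_of_subadditive (fun p : (ℝ → ℤ) × (ℝ → ℤ) => signedDistR p.1 p.2)
      signedDistR_zero.le (fun p q => signedDistR_add_le p.1 q.1 p.2 q.2) s fun i => (φ i, φ' i)

noncomputable def diagramFun (D : Multiset (ℝ × ℝ)) (t : ℝ) : ℤ :=
  (D.map fun ab => indR ab.1 t - indR ab.2 t).sum

lemma isDecompR_diagramFun (D : Multiset (ℝ × ℝ)) :
    IsDecompR (diagramFun D) (D.map Prod.fst) (D.map Prod.snd) := fun t => by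
  simp only [diagramFun, Multiset.sum_map_sub, Multiset.map_map, Function.comp_def]

def matchingPairing (m : Multiset ((ℝ × ℝ) × (ℝ × ℝ))) (r r' : Multiset (ℝ × ℝ)) :
    Multiset (ℝ × ℝ) :=
  m.map (fun xy => (xy.1.1, xy.2.1)) + m.map (fun xy => (xy.2.2, xy.1.2)) + r + r'.map Prod.swap

lemma matchingPairing_map_fst (m : Multiset ((ℝ × ℝ) × (ℝ × ℝ))) (r r' : Multiset (ℝ × ℝ)) :
    (matchingPairing m r r').map Prod.fst
      = (m.map Prod.fst + r).map Prod.fst + (m.map Prod.snd + r').map Prod.snd := by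
  simp only [matchingPairing, Multiset.map_add, Multiset.map_map, Function.comp_def,
    Prod.fst_swap]
  abel

lemma matchingPairing_map_snd (m : Multiset ((ℝ × ℝ) × (ℝ × ℝ))) (r r' : Multiset (ℝ × ℝ)) :
    (matchingPairing m r r').map Prod.snd
      = (m.map Prod.fst + r).map Prod.snd + (m.map Prod.snd + r').map Prod.fst := by
  simp only [matchingPairing, Multiset.map_add, Multiset.map_map, Function.comp_def,
    Prod.snd_swap]
  abel

lemma matchingPairing_cost_le (m : Multiset ((ℝ × ℝ) × (ℝ × ℝ))) {r r' : Multiset (ℝ × ℝ)}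
    (hr : ∀ ab ∈ r, ab.1 < ab.2) (hr' : ∀ ab ∈ r', ab.1 < ab.2) :
    ((matchingPairing m r r').map fun uv => |uv.1 - uv.2|).sum
      ≤ 2 * ((m.map fun xy => max |xy.1.1 - xy.2.1| |xy.1.2 - xy.2.2|).sum
        + ((r + r').map fun ab => (ab.2 - ab.1) / 2).sum) := by
  have hm : ∀ xy ∈ m, |xy.1.1 - xy.2.1| + |xy.2.2 - xy.1.2|
      ≤ 2 * max |xy.1.1 - xy.2.1| |xy.1.2 - xy.2.2| := fun xy _ => by
    rw [abs_sub_comm xy.2.2]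
    linarith [le_max_left |xy.1.1 - xy.2.1| |xy.1.2 - xy.2.2|,
      le_max_right |xy.1.1 - xy.2.1| |xy.1.2 - xy.2.2|]
  have hr_cost : ∀ ab ∈ r, |ab.1 - ab.2| = 2 * ((ab.2 - ab.1) / 2) := fun ab hab => by
    rw [abs_sub_comm, abs_of_pos (sub_pos.2 (hr ab hab))]
    ring
  have hr'_cost : ∀ ab ∈ r', |ab.2 - ab.1| = 2 * ((ab.2 - ab.1) / 2) := fun ab hab => by
    rw [abs_of_pos (sub_pos.2 (hr' ab hab))]
    ring
  simp only [matchingPairing, Multiset.map_add, Multiset.sum_add, Multiset.map_map,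
    Function.comp_def, Prod.fst_swap, Prod.snd_swap, mul_add]
  rw [← Multiset.sum_map_add, Multiset.map_congr rfl hr_cost, Multiset.map_congr rfl hr'_cost,
    Multiset.sum_map_mul_left, Multiset.sum_map_mul_left]
  have hm_sum := Multiset.sum_map_le_sum_map _ _ hm
  rw [Multiset.sum_map_mul_left] at hm_sum
  linarith

lemma signedDistR_diagramFun_le_two_mul_W1 {D D' : Multiset (ℝ × ℝ)}
    (hD : ∀ ab ∈ D, ab.1 < ab.2) (hD' : ∀ ab ∈ D', ab.1 < ab.2) :
    signedDistR (diagramFun D) (diagramFun D') ≤ 2 * W1 D D' := by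
  rw [W1, sInf_eq_iInf]
  simp only [ENNReal.mul_iInf_of_ne two_ne_zero ENNReal.ofNat_ne_top]
  refine le_iInf₂ fun c ⟨m, r, r', hfst, hsnd, hc⟩ => ?_
  have hr : ∀ ab ∈ r, ab.1 < ab.2 := fun ab hab => hD ab (hfst ▸ Multiset.mem_add.2 (.inr hab))
  have hr' : ∀ ab ∈ r', ab.1 < ab.2 :=
    fun ab hab => hD' ab (hsnd ▸ Multiset.mem_add.2 (.inr hab))
  calc signedDistR (diagramFun D) (diagramFun D')
      ≤ ENNReal.ofReal (((matchingPairing m r r').map fun uv => |uv.1 - uv.2|).sum) :=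
        signedDistR_le (isDecompR_diagramFun D) (isDecompR_diagramFun D')
          (by rw [matchingPairing_map_fst, hfst, hsnd]) (by rw [matchingPairing_map_snd, hfst, hsnd])
    _ ≤ 2 * c := by
        rw [hc, ← ENNReal.ofReal_ofNat 2, ← ENNReal.ofReal_mul zero_le_two]
        exact ENNReal.ofReal_le_ofReal (matchingPairing_cost_le m hr hr')

/-- Let `D_k, D'_k` (`k = 0, …, N`) be finite multisets of pairs
`(a, b) ∈ ℝ²` with `a < b`, and let `φ = Σ_k (−1)^k Σ_{(a,b) ∈ D_k} (1_{[a,∞)} − 1_{[b,∞)})`,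
similarly `φ'`. Then `d(φ, φ') ≤ 2 ⬝ Σ_k W₁(D_k, D'_k)`. -/
theorem stmt5 (N : ℕ) (D D' : Fin (N + 1) → Multiset (ℝ × ℝ))
    (hD : ∀ k, ∀ ab ∈ D k, ab.1 < ab.2) (hD' : ∀ k, ∀ ab ∈ D' k, ab.1 < ab.2) :
    signedDistR
        (fun t => ∑ k : Fin (N + 1), (-1 : ℤ) ^ (k : ℕ) *
          ((D k).map fun ab => indR ab.1 t - indR ab.2 t).sum)
        (fun t => ∑ k : Fin (N + 1), (-1 : ℤ) ^ (k : ℕ) *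
          ((D' k).map fun ab => indR ab.1 t - indR ab.2 t).sum)
      ≤ 2 * ∑ k : Fin (N + 1), W1 (D k) (D' k) := by
  have hsum := signedDistR_sum_le Finset.univ
    (fun (k : Fin (N + 1)) t => (-1) ^ (k : ℕ) * diagramFun (D k) t)
    (fun (k : Fin (N + 1)) t => (-1) ^ (k : ℕ) * diagramFun (D' k) t)
  simp only [Finset.sum_fn] at hsum
  refine hsum.trans ?_
  rw [Finset.mul_sum]
  exact Finset.sum_le_sum fun k _ => (signedDistR_neg_one_pow_mul_le _ _ _).trans
    (signedDistR_diagramFun_le_two_mul_W1 (hD k) (hD' k))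
end

section
/- Let K be a finite abstract simplicial complex and let f, g : K → ℝ^m be non-decreasing maps. Then d(ECP_f, ECP_g) ≤ Σ_{σ∈K} ‖f(σ) − g(σ)‖₁, where ‖·‖₁ is the ℓ¹ norm on ℝ^m. -/
open scoped Classical ENNReal

/-- A finite abstract simplicial complex on a vertex set `V`. -/
structure SimplicialCplx (V : Type*) where
  faces : Finset (Finset V)
  nonempty_faces : ∀ σ ∈ faces, σ.Nonempty
  down_closed : ∀ σ ∈ faces, ∀ τ, τ ⊆ σ → τ.Nonempty → τ ∈ faces

/-- The signed 1-Wasserstein distance between finitely presented functions. -/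
noncomputable def signedDist1W {m : ℕ} (φ φ' : (Fin m → ℝ) → ℤ) : ℝ≥0∞ :=
  sInf { c : ℝ≥0∞ | ∃ (P N P' N' : Multiset (Fin m → ℝ))
      (pr : Multiset ((Fin m → ℝ) × (Fin m → ℝ))),
      IsDecomp φ P N ∧ IsDecomp φ' P' N' ∧
      pr.map Prod.fst = P + N' ∧ pr.map Prod.snd = N + P' ∧
      c = ENNReal.ofReal ((pr.map fun uv => l1 uv.1 uv.2).sum) }

/-- The Euler characteristic profile of a non-decreasing filter `f : K → ℝ^m`:
`ECP_f(t) = Σ_{σ ∈ K, f σ ≤ t} (−1)^{dim σ}`. -/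
noncomputable def ECP {V : Type*} {m : ℕ} (K : SimplicialCplx V)
    (f : Finset V → (Fin m → ℝ)) : (Fin m → ℝ) → ℤ :=
  fun t => ∑ σ ∈ K.faces.filter (fun σ => f σ ≤ t), (-1 : ℤ) ^ (σ.card - 1)

lemma l1_comm {m : ℕ} (u v : Fin m → ℝ) : l1 u v = l1 v u := by
  simp only [l1, abs_sub_comm]

lemma isDecomp_sum_neg_one_pow {ι : Type*} {m : ℕ} (s : Finset ι) (d : ι → ℕ)
    (f : ι → (Fin m → ℝ)) :
    IsDecomp (fun t => ∑ i ∈ s.filter (fun i => f i ≤ t), (-1 : ℤ) ^ d i)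
      ((s.filter (fun i => Even (d i))).val.map f)
      ((s.filter (fun i => ¬ Even (d i))).val.map f) := by
  intro t
  simp only [Multiset.map_map, Function.comp_def, ← Finset.sum_eq_multiset_sum]
  rw [Finset.sum_filter, Finset.sum_filter, Finset.sum_filter, ← Finset.sum_sub_distrib]
  refine Finset.sum_congr rfl fun i _ => ?_
  by_cases hd : Even (d i)
  · simp [hd, hd.neg_one_pow, indQ]
  · simp [hd, (Nat.not_even_iff_odd.mp hd).neg_one_pow, indQ, apply_ite Neg.neg]

lemma isDecomp_ECP {V : Type*} {m : ℕ} (K : SimplicialCplx V) (f : Finset V → (Fin m → ℝ)) :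
    IsDecomp (ECP K f)
      ((K.faces.filter (fun σ => Even (σ.card - 1))).val.map f)
      ((K.faces.filter (fun σ => ¬ Even (σ.card - 1))).val.map f) :=
  isDecomp_sum_neg_one_pow K.faces (fun σ => σ.card - 1) f

/-- Transport `f i` to `g i` for every index: over `A` this pairs `P` with `P'`, over `B` it
pairs `N'` with `N`. -/
lemma signedDist1W_le_of_isDecomp {ι : Type*} {m : ℕ} {φ φ' : (Fin m → ℝ) → ℤ}
    (A B : Multiset ι) (f g : ι → (Fin m → ℝ))
    (hφ : IsDecomp φ (A.map f) (B.map f)) (hφ' : IsDecomp φ' (A.map g) (B.map g)) :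
    signedDist1W φ φ' ≤ ENNReal.ofReal (((A + B).map fun i => l1 (f i) (g i)).sum) := by
  refine sInf_le ⟨_, _, _, _, A.map (fun i => (f i, g i)) + B.map (fun i => (g i, f i)),
    hφ, hφ', ?_, ?_, ?_⟩
  · simp [Multiset.map_map]
  · simp [Multiset.map_map, add_comm]
  · simp [Multiset.map_map, l1_comm (g _)]

theorem stmt6_general {V : Type*} (m : ℕ) (K : SimplicialCplx V)
    (f g : Finset V → (Fin m → ℝ)) :
    signedDist1W (ECP K f) (ECP K g)
      ≤ ENNReal.ofReal (∑ σ ∈ K.faces, l1 (f σ) (g σ)) := by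
  have hfaces : (K.faces.filter (fun σ => Even (σ.card - 1))).val
      + (K.faces.filter (fun σ => ¬ Even (σ.card - 1))).val = K.faces.val :=
    Multiset.filter_add_not _ _
  have hle := signedDist1W_le_of_isDecomp _ _ f g (isDecomp_ECP K f) (isDecomp_ECP K g)
  rwa [hfaces] at hle

/-- For a finite simplicial complex `K` and non-decreasing maps
`f, g : K → ℝ^m`, `d(ECP_f, ECP_g) ≤ Σ_{σ ∈ K} ‖f σ − g σ‖₁`. -/
theorem stmt6 {V : Type*} (m : ℕ) (K : SimplicialCplx V)
    (f g : Finset V → (Fin m → ℝ))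
    (hf : ∀ σ ∈ K.faces, ∀ τ ∈ K.faces, σ ⊆ τ → f σ ≤ f τ)
    (hg : ∀ σ ∈ K.faces, ∀ τ ∈ K.faces, σ ⊆ τ → g σ ≤ g τ) :
    signedDist1W (ECP K f) (ECP K g)
      ≤ ENNReal.ofReal (∑ σ ∈ K.faces, l1 (f σ) (g σ)) :=
  stmt6_general m K f g
end

section
/- Let 𝒦 be a compact subset of the cone of linear forms on ℝ^m with nonnegative canonical coordinates, and let q ∈ [1, ∞]. There exists a constant C ≥ 0, depending only on 𝒦 and q, such that for every κ ∈ L¹(ℝ) ∩ L^∞(ℝ), every pair of finite abstract simplicial complexes K and K', and every pair of non-decreasing maps f : K → ℝ^m and g : K' → ℝ^m, one has ‖HT_f^κ − HT_g^κ‖_{L^q(𝒦)} ≤ C · ‖κ‖_∞ · d(ECP_f, ECP_g), as an inequality in [0, +∞]. -/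
open MeasureTheory
open scoped Classical ENNReal NNReal

/-- The signed 1-Wasserstein distance between finitely presented functions on `ℝ^m`. -/
noncomputable def signedW1Dist {m : ℕ} (φ φ' : (Fin m → ℝ) → ℤ) : ℝ≥0∞ :=
  sInf { c : ℝ≥0∞ | ∃ (P N P' N' : Multiset (Fin m → ℝ))
      (pr : Multiset ((Fin m → ℝ) × (Fin m → ℝ))),
      IsDecomp φ P N ∧ IsDecomp φ' P' N' ∧
      pr.map Prod.fst = P + N' ∧ pr.map Prod.snd = N + P' ∧
      c = ENNReal.ofReal ((pr.map fun uv => l1 uv.1 uv.2).sum) }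

/-- The hybrid transform with kernel `κ` of a non-decreasing filter `f : K → ℝ^m`,
evaluated at a linear form `ξ` (given by its coordinate vector):
`HT_f^κ(ξ) = ∫_ℝ κ(s) ⬝ (Σ_{σ ∈ K, ξ(f σ) ≤ s} (−1)^{dim σ}) ds`. -/
noncomputable def HT {V : Type*} {m : ℕ} (K : SimplicialCplx V)
    (f : Finset V → (Fin m → ℝ)) (κ : ℝ → ℝ) (ξ : Fin m → ℝ) : ℝ :=
  ∫ s, κ s * ((∑ σ ∈ K.faces.filter (fun σ => (∑ i, ξ i * f σ i) ≤ s),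
      (-1 : ℤ) ^ (σ.card - 1) : ℤ) : ℝ)

/-! Any two decompositions `(P, N)`, `(P₀, N₀)` of the same function satisfy `P + N₀ = N + P₀`,
since a multiset of points is determined by the sum of the indicators of its upper sets; the
values of `f` on the even- and odd-dimensional faces of `K` form one decomposition of `ECP_f`.
Hence, writing `T(a) = ∫_{s ≥ a} κ(s) ds`, we get `HT_f^κ(ξ) = Σ_{u ∈ P} T(ξ u) - Σ_{v ∈ N} T(ξ v)`
for every decomposition `(P, N)` of `ECP_f`. For a matching as in the definition of `d`,
`HT_f^κ(ξ) - HT_g^κ(ξ)` becomes the sum of `T(ξ u) - T(ξ v)` over matched pairs, and `T` is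
`‖κ‖_∞`-Lipschitz, so the difference is at most `‖κ‖_∞ ‖ξ‖_∞` times the cost of the matching.
Integrating over the compact set `𝒦` and taking the infimum over matchings gives the bound. -/

lemma Multiset.sum_map_ite_le_eq_count {α : Type*} [PartialOrder α] {u : α} (S : Multiset α)
    (hu : ∀ v ∈ S, v ≤ u → v = u) :
    (S.map fun v => if v ≤ u then (1 : ℤ) else 0).sum = S.count u := by
  induction S using Multiset.induction with
  | empty => simp
  | cons a S ih =>
    rw [Multiset.map_cons, Multiset.sum_cons, Multiset.count_cons,
      ih fun v hv => hu v (Multiset.mem_cons_of_mem hv)]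
    by_cases hau : a ≤ u
    · simp [hu a (Multiset.mem_cons_self a S) hau, add_comm]
    · simp [hau, show u ≠ a by rintro rfl; exact hau le_rfl]

-- At a minimal point `u` of `Q + R` the two sums count the multiplicities of `u`; erase it.
lemma Multiset.eq_of_sum_map_ite_le_eq {α : Type*} [PartialOrder α] {Q R : Multiset α}
    (h : ∀ t, (Q.map fun u => if u ≤ t then (1 : ℤ) else 0).sum =
      (R.map fun u => if u ≤ t then (1 : ℤ) else 0).sum) : Q = R := by
  induction Q using Multiset.strongInductionOn generalizing R with
  | ih Q IH =>
    obtain hempty | ⟨u₀, hu₀⟩ := (Q + R).toFinset.eq_empty_or_nonempty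
    · simp_all
    obtain ⟨u, hu, hmin⟩ := (Q + R).toFinset.exists_minimal ⟨u₀, hu₀⟩
    have hmin' : ∀ v ∈ Q + R, v ≤ u → v = u := fun v hv hvu =>
      le_antisymm hvu (hmin (Multiset.mem_toFinset.2 hv) hvu)
    have hcount : Q.count u = R.count u := by
      have := h u
      rwa [Multiset.sum_map_ite_le_eq_count Q fun v hv => hmin' v (Multiset.mem_add.2 (.inl hv)),
        Multiset.sum_map_ite_le_eq_count R fun v hv => hmin' v (Multiset.mem_add.2 (.inr hv)),
        Nat.cast_inj] at this
    have huQ : u ∈ Q := by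
      rcases Multiset.mem_add.1 (Multiset.mem_toFinset.1 hu) with huQ | huR
      · exact huQ
      · exact Multiset.count_pos.1 (hcount ▸ Multiset.count_pos.2 huR)
    have huR : u ∈ R := Multiset.count_pos.1 (hcount ▸ Multiset.count_pos.2 huQ)
    rw [← Multiset.cons_erase huQ, ← Multiset.cons_erase huR,
      IH _ (Multiset.erase_lt.2 huQ) fun t => ?_]
    have ht := h t
    rw [← Multiset.cons_erase huQ, ← Multiset.cons_erase huR] at ht
    simpa using ht

section Decomposition

variable {m : ℕ} {φ : (Fin m → ℝ) → ℤ} {P N P' N' : Multiset (Fin m → ℝ)}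

lemma IsDecomp.add_eq_add (h : IsDecomp φ P N) (h' : IsDecomp φ P' N') : P + N' = N + P' :=
  Multiset.eq_of_sum_map_ite_le_eq fun t => by
    have ht := h t
    have ht' := h' t
    simp only [indQ] at ht ht'
    simp only [Multiset.map_add, Multiset.sum_add]
    omega

lemma IsDecomp.sum_map_sub_eq {G : Type*} [AddCommGroup G] (h : IsDecomp φ P N)
    (h' : IsDecomp φ P' N') (F : (Fin m → ℝ) → G) :
    (P.map F).sum - (N.map F).sum = (P'.map F).sum - (N'.map F).sum := by
  have := congrArg (fun S => (S.map F).sum) (h.add_eq_add h')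
  simp only [Multiset.map_add, Multiset.sum_add] at this
  rw [sub_eq_sub_iff_add_eq_add, this, add_comm]

end Decomposition

section Faces

variable {V : Type*} {m : ℕ} (K : SimplicialCplx V) (f : Finset V → (Fin m → ℝ))

noncomputable def evenDimValues : Multiset (Fin m → ℝ) :=
  (K.faces.filter fun σ => Odd σ.card).val.map f

noncomputable def oddDimValues : Multiset (Fin m → ℝ) :=
  (K.faces.filter fun σ => ¬ Odd σ.card).val.map f

lemma sum_faces_neg_one_pow_zsmul {G : Type*} [AddCommGroup G] (F : (Fin m → ℝ) → G) :
    ∑ σ ∈ K.faces, (-1 : ℤ) ^ (σ.card - 1) • F (f σ) =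
      ((evenDimValues K f).map F).sum - ((oddDimValues K f).map F).sum := by
  rw [← Finset.sum_filter_add_sum_filter_not K.faces fun σ => Odd σ.card, sub_eq_add_neg,
    evenDimValues, oddDimValues, Multiset.map_map, Multiset.map_map, ← Multiset.sum_map_neg]
  congr 1 <;> refine Finset.sum_congr rfl fun σ hσ => ?_ <;>
    obtain ⟨hσK, hodd⟩ := Finset.mem_filter.1 hσ
  · rw [(Nat.Odd.sub_odd hodd odd_one).neg_one_pow, one_smul]; rfl
  · have hpos : 0 < σ.card := Finset.card_pos.2 (K.nonempty_faces σ hσK)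
    rw [(Nat.Even.sub_odd hpos (Nat.not_odd_iff_even.1 hodd) odd_one).neg_one_pow, neg_one_zsmul]
    rfl

lemma ECP_eq_sum_faces (t : Fin m → ℝ) :
    ECP K f t = ∑ σ ∈ K.faces, (-1 : ℤ) ^ (σ.card - 1) • indQ (f σ) t := by
  simp [ECP, indQ, Finset.sum_filter]

lemma isDecomp_ECP_s8 : IsDecomp (ECP K f) (evenDimValues K f) (oddDimValues K f) := fun t =>
  (ECP_eq_sum_faces K f t).trans (sum_faces_neg_one_pow_zsmul K f (indQ · t))

end Faces

noncomputable def tailIntegral (κ : ℝ → ℝ) (a : ℝ) : ℝ := ∫ s in Set.Ici a, κ s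

lemma abs_tailIntegral_sub_le {κ : ℝ → ℝ} (hκ : Integrable κ) {E : ℝ}
    (hE : ∀ᵐ s, ‖κ s‖ ≤ E) (a b : ℝ) :
    |tailIntegral κ a - tailIntegral κ b| ≤ E * |a - b| := by
  rw [tailIntegral, tailIntegral,
    intervalIntegral.integral_Ici_sub_Ici' hκ.integrableOn hκ.integrableOn, abs_sub_comm a b]
  exact intervalIntegral.norm_integral_le_of_norm_le_const_ae (hE.mono fun s hs _ => hs)

section HybridTransform

variable {V : Type*} {m : ℕ} (K : SimplicialCplx V) (f : Finset V → (Fin m → ℝ))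
  {κ : ℝ → ℝ}

lemma HT_eq_sum_faces (hκ : Integrable κ) (ξ : Fin m → ℝ) :
    HT K f κ ξ = ∑ σ ∈ K.faces, (-1 : ℤ) ^ (σ.card - 1) • tailIntegral κ (∑ i, ξ i * f σ i) := by
  simp_rw [tailIntegral, ← integral_indicator measurableSet_Ici, zsmul_eq_mul,
    ← integral_const_mul]
  rw [HT, ← integral_finsetSum _ fun σ _ => (hκ.indicator measurableSet_Ici).const_mul _]
  congr 1 with s
  rw [Finset.sum_filter, Int.cast_sum, Finset.mul_sum]
  refine Finset.sum_congr rfl fun σ _ => ?_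
  simp [Set.indicator_apply, mul_comm]

lemma HT_eq_of_isDecomp (hκ : Integrable κ) {P N : Multiset (Fin m → ℝ)}
    (h : IsDecomp (ECP K f) P N) (ξ : Fin m → ℝ) :
    HT K f κ ξ = (P.map fun u => tailIntegral κ (∑ i, ξ i * u i)).sum -
      (N.map fun u => tailIntegral κ (∑ i, ξ i * u i)).sum := by
  rw [HT_eq_sum_faces K f hκ,
    sum_faces_neg_one_pow_zsmul K f fun u => tailIntegral κ (∑ i, ξ i * u i),
    (isDecomp_ECP_s8 K f).sum_map_sub_eq h]

lemma HT_eq_zero_of_ae_eq_zero (hκ : κ =ᵐ[volume] 0) (ξ : Fin m → ℝ) : HT K f κ ξ = 0 :=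
  integral_eq_zero_of_ae (hκ.mono fun s hs => by simp [hs])

end HybridTransform

section Matching

variable {m : ℕ}

lemma l1_nonneg (u v : Fin m → ℝ) : 0 ≤ l1 u v :=
  Finset.sum_nonneg fun _ _ => abs_nonneg _

lemma abs_dot_sub_le (ξ u v : Fin m → ℝ) :
    |∑ i, ξ i * u i - ∑ i, ξ i * v i| ≤ ‖ξ‖ * l1 u v := by
  rw [← Finset.sum_sub_distrib, l1, Finset.mul_sum]
  refine (Finset.abs_sum_le_sum_abs _ _).trans (Finset.sum_le_sum fun i _ => ?_)
  rw [← mul_sub, abs_mul, ← Real.norm_eq_abs (ξ i)]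
  exact mul_le_mul_of_nonneg_right (norm_le_pi_norm ξ i) (abs_nonneg _)

lemma sum_map_sub_eq_of_matching {G : Type*} [AddCommGroup G] (F : (Fin m → ℝ) → G)
    {P N P' N' : Multiset (Fin m → ℝ)} {pr : Multiset ((Fin m → ℝ) × (Fin m → ℝ))}
    (hfst : pr.map Prod.fst = P + N') (hsnd : pr.map Prod.snd = N + P') :
    (P.map F).sum - (N.map F).sum - ((P'.map F).sum - (N'.map F).sum) =
      (pr.map fun uv => F uv.1 - F uv.2).sum := by
  have h₁ : (pr.map fun uv => F uv.1) = (P + N').map F := by rw [← hfst, Multiset.map_map]; rfl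
  have h₂ : (pr.map fun uv => F uv.2) = (N + P').map F := by rw [← hsnd, Multiset.map_map]; rfl
  rw [Multiset.sum_map_sub, h₁, h₂, Multiset.map_add, Multiset.map_add, Multiset.sum_add,
    Multiset.sum_add]
  abel

lemma abs_sum_map_sub_le {F : (Fin m → ℝ) → ℝ} {L : ℝ} (hF : ∀ u v, |F u - F v| ≤ L * l1 u v)
    (pr : Multiset ((Fin m → ℝ) × (Fin m → ℝ))) :
    |(pr.map fun uv => F uv.1 - F uv.2).sum| ≤ L * (pr.map fun uv => l1 uv.1 uv.2).sum := by
  rw [← Multiset.sum_map_mul_left]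
  calc |(pr.map fun uv => F uv.1 - F uv.2).sum|
      ≤ (pr.map fun uv => |F uv.1 - F uv.2|).sum := by
        simpa only [Multiset.map_map, Function.comp_def] using
          Multiset.abs_sum_le_sum_abs (s := pr.map fun uv => F uv.1 - F uv.2)
    _ ≤ (pr.map fun uv => L * l1 uv.1 uv.2).sum :=
        Multiset.sum_map_le_sum_map _ _ fun uv _ => hF uv.1 uv.2

end Matching

section Stability

variable {m : ℕ} {V V' : Type*} (K : SimplicialCplx V) (K' : SimplicialCplx V')
  (f : Finset V → (Fin m → ℝ)) (g : Finset V' → (Fin m → ℝ)) {κ : ℝ → ℝ}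
  {P N P' N' : Multiset (Fin m → ℝ)} {pr : Multiset ((Fin m → ℝ) × (Fin m → ℝ))}

lemma abs_HT_sub_le (hκ : Integrable κ) (hκ_top : MemLp κ ⊤)
    (hPN : IsDecomp (ECP K f) P N) (hPN' : IsDecomp (ECP K' g) P' N')
    (hfst : pr.map Prod.fst = P + N') (hsnd : pr.map Prod.snd = N + P') (ξ : Fin m → ℝ) :
    |HT K f κ ξ - HT K' g κ ξ| ≤
      lpNorm κ ⊤ volume * ‖ξ‖ * (pr.map fun uv => l1 uv.1 uv.2).sum := by
  rw [HT_eq_of_isDecomp K f hκ hPN, HT_eq_of_isDecomp K' g hκ hPN',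
    sum_map_sub_eq_of_matching _ hfst hsnd]
  refine abs_sum_map_sub_le (F := fun u => tailIntegral κ (∑ i, ξ i * u i)) (fun u v => ?_) pr
  calc _ ≤ lpNorm κ ⊤ volume * |∑ i, ξ i * u i - ∑ i, ξ i * v i| :=
        abs_tailIntegral_sub_le hκ (ae_le_lpNorm_exponent_top hκ_top) _ _
    _ ≤ lpNorm κ ⊤ volume * (‖ξ‖ * l1 u v) :=
        mul_le_mul_of_nonneg_left (abs_dot_sub_le ξ u v) lpNorm_nonneg
    _ = _ := (mul_assoc _ _ _).symm

lemma eLpNorm_HT_sub_le (hκ : Integrable κ) (hκ_top : MemLp κ ⊤)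
    {𝒦 : Set (Fin m → ℝ)} (h𝒦 : MeasurableSet 𝒦) {R : ℝ} (hR0 : 0 ≤ R)
    (hR : ∀ ξ ∈ 𝒦, ‖ξ‖ ≤ R) (q : ℝ≥0∞)
    (hPN : IsDecomp (ECP K f) P N) (hPN' : IsDecomp (ECP K' g) P' N')
    (hfst : pr.map Prod.fst = P + N') (hsnd : pr.map Prod.snd = N + P') :
    eLpNorm (fun ξ => HT K f κ ξ - HT K' g κ ξ) q (volume.restrict 𝒦) ≤
      volume 𝒦 ^ q.toReal⁻¹ * ENNReal.ofReal R * eLpNorm κ ⊤ volume *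
        ENNReal.ofReal (pr.map fun uv => l1 uv.1 uv.2).sum := by
  have hcost : 0 ≤ (pr.map fun uv => l1 uv.1 uv.2).sum :=
    Multiset.sum_nonneg fun _ hx => by
      obtain ⟨uv, _, rfl⟩ := Multiset.mem_map.1 hx
      exact l1_nonneg _ _
  have hbound : ∀ᵐ ξ ∂volume.restrict 𝒦, ‖HT K f κ ξ - HT K' g κ ξ‖ ≤
      lpNorm κ ⊤ volume * R * (pr.map fun uv => l1 uv.1 uv.2).sum :=
    ae_restrict_of_forall_mem h𝒦 fun ξ hξ =>
      (abs_HT_sub_le K K' f g hκ hκ_top hPN hPN' hfst hsnd ξ).trans <|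
        mul_le_mul_of_nonneg_right (mul_le_mul_of_nonneg_left (hR ξ hξ) lpNorm_nonneg) hcost
  refine (eLpNorm_le_of_ae_bound hbound).trans_eq ?_
  rw [Measure.restrict_apply_univ, ENNReal.ofReal_mul (mul_nonneg lpNorm_nonneg hR0),
    ENNReal.ofReal_mul lpNorm_nonneg, ofReal_lpNorm hκ_top]
  ring

end Stability

theorem stmt8_general (m : ℕ) (𝒦 : Set (Fin m → ℝ)) (h𝒦c : IsCompact 𝒦) (q : ℝ≥0∞) :
    ∃ C : ℝ≥0, ∀ (κ : ℝ → ℝ), Integrable κ → MemLp κ ⊤ →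
      ∀ (V V' : Type) (K : SimplicialCplx V) (K' : SimplicialCplx V')
        (f : Finset V → (Fin m → ℝ)) (g : Finset V' → (Fin m → ℝ)),
        (∀ σ ∈ K.faces, ∀ τ ∈ K.faces, σ ⊆ τ → f σ ≤ f τ) →
        (∀ σ ∈ K'.faces, ∀ τ ∈ K'.faces, σ ⊆ τ → g σ ≤ g τ) →
        eLpNorm (fun ξ => HT K f κ ξ - HT K' g κ ξ) q (volume.restrict 𝒦)
          ≤ (C : ℝ≥0∞) * eLpNorm κ ⊤ volume * signedW1Dist (ECP K f) (ECP K' g) := by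
  obtain ⟨R, hR0, hR⟩ := h𝒦c.isBounded.exists_pos_norm_le
  -- `max 1 _` keeps the constant nonzero, so that it can be pulled out of the infimum
  set A : ℝ≥0∞ := max 1 (volume 𝒦 ^ q.toReal⁻¹)
  have hA : A ≠ ⊤ := max_ne_top ENNReal.one_ne_top
    (ENNReal.rpow_ne_top_of_nonneg (by positivity) h𝒦c.measure_lt_top.ne)
  refine ⟨A.toNNReal * R.toNNReal, fun κ hκ hκ_top V V' K K' f g _ _ => ?_⟩
  -- separate case because `signedW1Dist` may be `⊤` and `0 * ⊤ = 0`
  obtain hE | hE := eq_or_ne (eLpNorm κ ⊤ volume) 0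
  · have hκ0 := (eLpNorm_eq_zero_iff hκ_top.1 ENNReal.top_ne_zero).1 hE
    simp [HT_eq_zero_of_ae_eq_zero _ _ hκ0]
  have hC : ((A.toNNReal * R.toNNReal : ℝ≥0) : ℝ≥0∞) = A * ENNReal.ofReal R := by
    rw [ENNReal.coe_mul, ENNReal.coe_toNNReal hA]; rfl
  rw [hC, signedW1Dist, sInf_eq_iInf', ENNReal.mul_iInf_of_ne
    (mul_ne_zero (mul_ne_zero (zero_lt_one.trans_le (le_max_left _ _)).ne'
      (ENNReal.ofReal_pos.2 hR0).ne') hE)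
    (ENNReal.mul_ne_top (ENNReal.mul_ne_top hA ENNReal.ofReal_ne_top) hκ_top.2.ne)]
  refine le_iInf ?_
  rintro ⟨_, P, N, P', N', pr, hPN, hPN', hfst, hsnd, rfl⟩
  refine (eLpNorm_HT_sub_le K K' f g hκ hκ_top h𝒦c.measurableSet hR0.le hR q
    hPN hPN' hfst hsnd).trans ?_
  gcongr
  exact le_max_right _ _

/-- Let `𝒦` be a compact subset of the cone of linear forms on `ℝ^m`
with nonnegative canonical coordinates, and `q ∈ [1, ∞]`. There is a constant `C ≥ 0`,
depending only on `𝒦` and `q`, such that for every `κ ∈ L¹(ℝ) ∩ L^∞(ℝ)`, every pair of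
finite simplicial complexes `K, K'` and non-decreasing `f : K → ℝ^m`, `g : K' → ℝ^m`,
`‖HT_f^κ − HT_g^κ‖_{L^q(𝒦)} ≤ C ⬝ ‖κ‖_∞ ⬝ d(ECP_f, ECP_g)` in `[0, +∞]`. -/
theorem stmt8 (m : ℕ) (𝒦 : Set (Fin m → ℝ)) (h𝒦c : IsCompact 𝒦)
    (h𝒦 : ∀ ξ ∈ 𝒦, ∀ i, 0 ≤ ξ i) (q : ℝ≥0∞) (hq : 1 ≤ q) :
    ∃ C : ℝ≥0, ∀ (κ : ℝ → ℝ), Integrable κ → MemLp κ ⊤ →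
      ∀ (V V' : Type) (K : SimplicialCplx V) (K' : SimplicialCplx V')
        (f : Finset V → (Fin m → ℝ)) (g : Finset V' → (Fin m → ℝ)),
        (∀ σ ∈ K.faces, ∀ τ ∈ K.faces, σ ⊆ τ → f σ ≤ f τ) →
        (∀ σ ∈ K'.faces, ∀ τ ∈ K'.faces, σ ⊆ τ → g σ ≤ g τ) →
        eLpNorm (fun ξ => HT K f κ ξ - HT K' g κ ξ) q (volume.restrict 𝒦)
          ≤ (C : ℝ≥0∞) * eLpNorm κ ⊤ volume * signedW1Dist (ECP K f) (ECP K' g) :=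
  stmt8_general m 𝒦 h𝒦c q
end

section
/- Let K be a finite abstract simplicial complex, f : K → ℝ^m a non-decreasing map, and κ ∈ L¹(ℝ). Then the hybrid transform HT_f^κ : ξ ↦ ∫_ℝ κ(s) · (Σ_{σ∈K, ξ(f(σ))≤s} (−1)^{dim σ}) ds is a continuous function of the linear form ξ on the cone of linear forms on ℝ^m with nonnegative canonical coordinates. -/
open MeasureTheory
open scoped Classical

/-- For a finite simplicial complex `K`, a non-decreasing map
`f : K → ℝ^m` and a kernel `κ ∈ L¹(ℝ)`, the hybrid transform
`HT_f^κ : ξ ↦ ∫_ℝ κ(s) ⬝ (Σ_{σ ∈ K, ξ(f σ) ≤ s} (−1)^{dim σ}) ds`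
is continuous on the cone of linear forms with nonnegative canonical coordinates
(identified with `[0,∞)^m ⊆ ℝ^m` with its subspace topology). -/
theorem stmt12 {V : Type*} (m : ℕ) (K : SimplicialCplx V)
    (f : Finset V → (Fin m → ℝ))
    (hf : ∀ σ ∈ K.faces, ∀ τ ∈ K.faces, σ ⊆ τ → f σ ≤ f τ)
    (κ : ℝ → ℝ) (hκ : Integrable κ) :
    ContinuousOn
      (fun ξ : Fin m → ℝ => ∫ s, κ s *
        ((∑ σ ∈ K.faces.filter (fun σ => (∑ i, ξ i * f σ i) ≤ s),
          (-1 : ℤ) ^ (σ.card - 1) : ℤ) : ℝ))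
      {ξ : Fin m → ℝ | ∀ i, 0 ≤ ξ i} := by
  -- The primitive `G t = ∫ s in Ici t, κ s` is continuous.
  set G : ℝ → ℝ := fun t => ∫ s in Set.Ici t, κ s with hG
  have hGcont : Continuous G := by
    have h1 : ∀ t : ℝ, G t = (∫ s, κ s) - ∫ s in Set.Iic t, κ s := by
      intro t
      rw [MeasureTheory.integral_Iic_eq_integral_Iio]
      have h := MeasureTheory.integral_add_compl (measurableSet_Iio (a := t)) hκ
      rw [Set.compl_Iio] at h
      simp only [hG]
      linarith [h]
    have h2 : ∀ t : ℝ, ∫ s in Set.Iic t, κ s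
        = (∫ s in Set.Iic (0:ℝ), κ s) + ∫ s in (0:ℝ)..t, κ s := by
      intro t
      have h := intervalIntegral.integral_Iic_sub_Iic (a := 0) (b := t)
        (hκ.integrableOn) (hκ.integrableOn)
      linarith [h]
    have hc : Continuous fun t : ℝ => ∫ s in (0:ℝ)..t, κ s :=
      hκ.continuous_primitive 0
    have : Continuous fun t : ℝ =>
        (∫ s, κ s) - ((∫ s in Set.Iic (0:ℝ), κ s) + ∫ s in (0:ℝ)..t, κ s) :=
      continuous_const.sub (continuous_const.add hc)
    convert this using 1
    funext t
    rw [h1 t, h2 t]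
  -- Rewrite the transform as a finite sum of continuous functions.
  have key : ∀ ξ : Fin m → ℝ,
      (∫ s, κ s * ((∑ σ ∈ K.faces.filter (fun σ => (∑ i, ξ i * f σ i) ≤ s),
          (-1 : ℤ) ^ (σ.card - 1) : ℤ) : ℝ))
      = ∑ σ ∈ K.faces, ((-1 : ℤ) ^ (σ.card - 1) : ℝ) * G (∑ i, ξ i * f σ i) := by
    intro ξ
    have hrw : ∀ s : ℝ, κ s * ((∑ σ ∈ K.faces.filter (fun σ => (∑ i, ξ i * f σ i) ≤ s),
          (-1 : ℤ) ^ (σ.card - 1) : ℤ) : ℝ)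
        = ∑ σ ∈ K.faces, (Set.Ici (∑ i, ξ i * f σ i)).indicator
            (fun s => κ s * ((-1 : ℤ) ^ (σ.card - 1) : ℝ)) s := by
      intro s
      rw [Finset.sum_filter]
      push_cast
      rw [Finset.mul_sum]
      refine Finset.sum_congr rfl fun σ _ => ?_
      by_cases h : (∑ i, ξ i * f σ i) ≤ s
      · simp [Set.indicator_apply, Set.mem_Ici, h]
      · simp [Set.indicator_apply, Set.mem_Ici, h]
    simp_rw [hrw]
    rw [MeasureTheory.integral_finset_sum]
    · refine Finset.sum_congr rfl fun σ _ => ?_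
      rw [MeasureTheory.integral_indicator measurableSet_Ici,
        MeasureTheory.integral_mul_const, mul_comm]
    · intro σ _
      exact ((hκ.mul_const _).indicator measurableSet_Ici)
  have : ContinuousOn (fun ξ : Fin m → ℝ =>
      ∑ σ ∈ K.faces, ((-1 : ℤ) ^ (σ.card - 1) : ℝ) * G (∑ i, ξ i * f σ i))
      {ξ : Fin m → ℝ | ∀ i, 0 ≤ ξ i} := by
    refine Continuous.continuousOn ?_
    refine continuous_finset_sum _ fun σ _ => ?_
    exact continuous_const.mul (hGcont.comp
      (continuous_finset_sum _ fun i _ => (continuous_apply i).mul continuous_const))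
  exact this.congr fun ξ _ => key ξ
end

section
/- Let 0 < a < b. Then (p(log b − log a)/(b^p − a^p))^{1/p} tends to 1/b as p → ∞. -/
/-!
Write the quantity as `(p (log b - log a))^{1/p} / (b^p - a^p)^{1/p}`. The numerator tends to `1`
because `p^{1/p} → 1`, and the denominator tends to `b` because
`(b^p - a^p)^{1/p} = b (1 - (a/b)^p)^{1/p}` with `(a/b)^p → 0` and `1/p → 0`.
-/

open Filter Topology Real

lemma tendsto_one_div_atTop_nhds_zero : Tendsto (fun p : ℝ => 1 / p) atTop (𝓝 0) :=
  tendsto_const_nhds.div_atTop tendsto_id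

lemma tendsto_rpow_one_div_atTop_of_pos {c : ℝ} (hc : 0 < c) :
    Tendsto (fun p : ℝ => c ^ (1 / p)) atTop (𝓝 1) := by
  simpa using tendsto_const_nhds.rpow tendsto_one_div_atTop_nhds_zero (Or.inl hc.ne')

lemma tendsto_mul_const_rpow_one_div_atTop {c : ℝ} (hc : 0 < c) :
    Tendsto (fun p : ℝ => (p * c) ^ (1 / p)) atTop (𝓝 1) := by
  have h := tendsto_rpow_div.mul (tendsto_rpow_one_div_atTop_of_pos hc)
  rw [mul_one] at h
  refine h.congr' ?_
  filter_upwards [eventually_ge_atTop 0] with p hp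
  rw [mul_rpow hp hc.le]

lemma tendsto_one_sub_rpow_rpow_one_div_atTop {r : ℝ} (hr₀ : -1 < r) (hr₁ : r < 1) :
    Tendsto (fun p : ℝ => (1 - r ^ p) ^ (1 / p)) atTop (𝓝 1) := by
  have hbase : Tendsto (fun p : ℝ => 1 - r ^ p) atTop (𝓝 1) := by
    simpa using tendsto_const_nhds.sub (tendsto_rpow_atTop_of_base_lt_one r hr₀ hr₁)
  simpa using hbase.rpow tendsto_one_div_atTop_nhds_zero (Or.inl one_ne_zero)

lemma rpow_sub_rpow_rpow_one_div {a b p : ℝ} (ha : 0 ≤ a) (hb : 0 < b) (hab : a ≤ b)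
    (hp : 0 < p) :
    (b ^ p - a ^ p) ^ (1 / p) = b * (1 - (a / b) ^ p) ^ (1 / p) := by
  have hbp : 0 < b ^ p := rpow_pos_of_pos hb p
  have hfactor : b ^ p - a ^ p = b ^ p * (1 - (a / b) ^ p) := by
    rw [div_rpow ha hb.le]
    field_simp
  have hnonneg : 0 ≤ 1 - (a / b) ^ p :=
    sub_nonneg.mpr (rpow_le_one (div_nonneg ha hb.le) ((div_le_one hb).mpr hab) hp.le)
  rw [hfactor, mul_rpow hbp.le hnonneg, one_div, rpow_rpow_inv hb.le hp.ne']

lemma tendsto_rpow_sub_rpow_rpow_one_div_atTop {a b : ℝ} (ha : 0 ≤ a) (hab : a < b) :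
    Tendsto (fun p : ℝ => (b ^ p - a ^ p) ^ (1 / p)) atTop (𝓝 b) := by
  have hb : 0 < b := ha.trans_lt hab
  have h := (tendsto_one_sub_rpow_rpow_one_div_atTop
    (neg_one_lt_zero.trans_le (div_nonneg ha hb.le))
    ((div_lt_one hb).mpr hab)).const_mul b
  rw [mul_one] at h
  refine h.congr' ?_
  filter_upwards [eventually_gt_atTop 0] with p hp
  rw [rpow_sub_rpow_rpow_one_div ha hb hab.le hp]

/-- For `0 < a < b`,
`(p(log b − log a)/(b^p − a^p))^{1/p} → 1/b` as `p → ∞`. -/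
theorem stmt14 (a b : ℝ) (ha : 0 < a) (hab : a < b) :
    Filter.Tendsto
      (fun p : ℝ => (p * (Real.log b - Real.log a) / (b ^ p - a ^ p)) ^ (1 / p))
      Filter.atTop (nhds (1 / b)) := by
  have hC : 0 < Real.log b - Real.log a := sub_pos.mpr (Real.log_lt_log ha hab)
  have h := (tendsto_mul_const_rpow_one_div_atTop hC).div
    (tendsto_rpow_sub_rpow_rpow_one_div_atTop ha.le hab) (ha.trans hab).ne'
  refine h.congr' ?_
  filter_upwards [eventually_ge_atTop 0] with p hp
  have hden : 0 ≤ b ^ p - a ^ p := sub_nonneg.mpr (rpow_le_rpow ha.le hab.le hp)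
  exact (div_rpow (mul_nonneg hp hC.le) hden _).symm
end
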